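/- arXiv:2209.15116 — 2 statements merged into one kernel-verified Lean document; each statement's English description precedes it below -/
import Mathlib

section
/- Let S be a sub-semifield of 𝕋 (with S ≠ 𝔹), let n, k ≥ 1, and let C be a real k × (n+1) matrix whose first column is lexicographically greater than or equal to the zero vector and none of whose rows is the zero row. For a term m = t^α·χ^u of S[ℤⁿ] (with t^α ∈ S^×, i.e., α ∈ log S^× ⊆ ℝ, and u ∈ ℤⁿ) define Ψ(m) = C·(α, u₁, …, u_n)ᵀ ∈ ℝ^k, and for a nonzero polynomial f ∈ S[ℤⁿ] define Ψ(f) to be the lexicographic maximum of Ψ(m) over the terms m of f. Then the following are equivalent: (i) for all nonzero f, g ∈ S[ℤⁿ] there exists b ∈ S^× such that Ψ(b·g) <_lex Ψ(f) (i.e., the prime congruence on S[ℤⁿ] defined by C, under which f ≡ g iff Ψ(f) = Ψ(g), is S-continuous); (ii) the (1,1) entry of C is strictly positive. -/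
/-- A totally ordered idempotent semifield, assumed different from the Boolean semifield `𝔹`. -/
class IdemTOSemifield (K : Type*) extends CommSemiring K, LinearOrder K where
  add_eq_max : ∀ a b : K, a + b = max a b
  exists_inv : ∀ a : K, a ≠ 0 → ∃ b : K, a * b = 1
  exists_nontrivial_unit : ∃ a : K, a ≠ 0 ∧ a ≠ 1

/-- The canonical topology on a totally ordered semifield. -/
def canonicalTopology (K : Type*) [IdemTOSemifield K] : TopologicalSpace K :=
  TopologicalSpace.generateFrom
    {s : Set K | (∃ a : K, a ≠ 0 ∧ s = {a}) ∨ (∃ a : K, a ≠ 0 ∧ s = Set.Iic a)}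

private theorem nnreal_mul_max (a b c : NNReal) : a * max b c = max (a * b) (a * c) := by
  rcases le_total b c with h | h
  · rw [max_eq_right h, max_eq_right (mul_le_mul_right h a)]
  · rw [max_eq_left h, max_eq_left (mul_le_mul_right h a)]

private theorem nnreal_max_mul (a b c : NNReal) : max a b * c = max (a * c) (b * c) := by
  rcases le_total a b with h | h
  · rw [max_eq_right h, max_eq_right (mul_le_mul_left h c)]
  · rw [max_eq_left h, max_eq_left (mul_le_mul_left h c)]

/-- The tropical semifield `𝕋`, modelled as `[0, ∞)` with addition `max` and the usual
multiplication. -/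
def Trop : Type := NNReal

namespace Trop

/-- Regard a nonnegative real as an element of `Trop`. -/
def mk (x : NNReal) : Trop := x

/-- The underlying nonnegative real of an element of `Trop`. -/
def toNNReal (x : Trop) : NNReal := x

noncomputable instance instLinearOrder : LinearOrder Trop :=
  inferInstanceAs (LinearOrder NNReal)

noncomputable instance instAdd : Add Trop := ⟨fun a b => max a b⟩
instance instZero : Zero Trop := inferInstanceAs (Zero NNReal)
instance instMul : Mul Trop := inferInstanceAs (Mul NNReal)
instance instOne : One Trop := inferInstanceAs (One NNReal)

noncomputable instance instCommSemiring : CommSemiring Trop where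
  __ := (inferInstance : CommMonoidWithZero NNReal)
  add a b := a + b
  nsmul := nsmulRec
  add_assoc a b c := max_assoc a b c
  zero_add a := max_eq_right (zero_le : (0 : NNReal) ≤ toNNReal a)
  add_zero a := max_eq_left (zero_le : (0 : NNReal) ≤ toNNReal a)
  add_comm a b := max_comm a b
  left_distrib a b c := by exact nnreal_mul_max a b c
  right_distrib a b c := by exact nnreal_max_mul a b c

noncomputable instance instIdemTOSemifield : IdemTOSemifield Trop where
  add_eq_max a b := rfl
  exists_inv a ha :=
    ⟨mk (toNNReal a)⁻¹, by exact mul_inv_cancel₀ (a := toNNReal a) (fun h => ha h)⟩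
  exists_nontrivial_unit :=
    ⟨mk 2, fun h => two_ne_zero (show (2 : NNReal) = 0 from h),
      fun h => by
        have : (2 : NNReal) = 1 := h
        norm_num at this⟩

end Trop

/-- `S` is (isomorphic to) a sub-semifield of the tropical semifield `𝕋` (and `S ≠ 𝔹`). -/
class TropSub (S : Type*) extends IdemTOSemifield S where
  emb : S →+* Trop
  emb_injective : Function.Injective emb

/-- The logarithm of an element of `𝕋` (sending `t^α` to `α`; the value at `0` is junk). -/
noncomputable def Trop.log (x : Trop) : ℝ := Real.log (Trop.toNNReal x)

/-- The lexicographic linear order on `ℝ^k`. -/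
noncomputable instance lexRealLinearOrder (k : ℕ) : LinearOrder (Lex (Fin k → ℝ)) := by
  have h : WellFoundedLT (Fin k) := inferInstance
  exact @Pi.Lex.linearOrder (Fin k) (fun _ => ℝ) _ h inferInstance

/-- The map `Ψ` associated to a real `k × (n+1)` matrix `C`: it sends a term `t^α · χ^u` of
`S[ℤⁿ]` to `C · (α, u₁, …, uₙ)ᵀ` and a polynomial to the lexicographic maximum of the values of
its terms (with `Ψ 0 = ⊥`, playing the role of `-∞`). -/
noncomputable def matrixPsi {S : Type*} [TropSub S] {n k : ℕ}
    (C : Matrix (Fin k) (Fin (n + 1)) ℝ) (f : AddMonoidAlgebra S (Fin n → ℤ)) :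
    WithBot (Lex (Fin k → ℝ)) :=
  Finset.sup (α := WithBot (Lex (Fin k → ℝ))) (Finsupp.support f.coeff) fun u =>
    WithBot.some (toLex (C.mulVec
      (Fin.cons (Trop.log (TropSub.emb (S := S) (f.coeff u))) fun i => ((u i : ℤ) : ℝ))))

/-!
Statement 7: for a real `k × (n+1)` matrix `C` whose first column is lexicographically
nonnegative and which has no zero row, the prime congruence on `S[ℤⁿ]` defined by `C` is
`S`-continuous (encoded as: for all nonzero `f, g` there is a nonzero `b ∈ S` with
`Ψ(b·g) <ₗₑₓ Ψ(f)`) if and only if the `(1,1)` entry of `C` is strictly positive.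
-/

section AuxLemmas

variable {S : Type*} [TropSub S]

private lemma trop_emb_ne_zero {a : S} (ha : a ≠ 0) : (TropSub.emb (S := S) a : Trop) ≠ 0 := by
  intro h
  exact ha (TropSub.emb_injective (by rw [h, map_zero]))

private lemma s_one_ne_zero : (1 : S) ≠ 0 := by
  intro h
  have := congrArg (TropSub.emb (S := S)) h
  rw [map_one, map_zero] at this
  exact one_ne_zero (α := NNReal) this

private lemma s_mul_ne_zero {a b : S} (ha : a ≠ 0) (hb : b ≠ 0) : a * b ≠ 0 := by
  intro h
  obtain ⟨c, hc⟩ := IdemTOSemifield.exists_inv a ha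
  apply hb
  calc b = (a * c) * b := by rw [hc, one_mul]
    _ = c * (a * b) := by ring
    _ = 0 := by rw [h, mul_zero]

private lemma trop_coe_ne_zero {x : Trop} (hx : x ≠ 0) :
    ((Trop.toNNReal x : NNReal) : ℝ) ≠ 0 := by
  intro h
  exact hx (by exact_mod_cast h)

private lemma trop_log_mul {x y : Trop} (hx : x ≠ 0) (hy : y ≠ 0) :
    Trop.log (x * y) = Trop.log x + Trop.log y := by
  unfold Trop.log
  have : ((Trop.toNNReal (x * y) : NNReal) : ℝ) =
      ((Trop.toNNReal x : NNReal) : ℝ) * ((Trop.toNNReal y : NNReal) : ℝ) := by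
    exact_mod_cast rfl
  rw [this, Real.log_mul (trop_coe_ne_zero hx) (trop_coe_ne_zero hy)]

private lemma trop_log_one : Trop.log (1 : Trop) = 0 := by
  show Real.log ((1 : NNReal) : ℝ) = 0
  simp

private lemma s_pow_ne_zero {c : S} (hc : c ≠ 0) (m : ℕ) : c ^ m ≠ 0 := by
  induction m with
  | zero => simpa using s_one_ne_zero
  | succ m ih => rw [pow_succ]; exact s_mul_ne_zero ih hc

private lemma log_emb_pow {c : S} (hc : c ≠ 0) (m : ℕ) :
    Trop.log (TropSub.emb (S := S) (c ^ m)) = m * Trop.log (TropSub.emb (S := S) c) := by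
  induction m with
  | zero => rw [pow_zero, map_one, trop_log_one]; simp
  | succ m ih =>
    rw [pow_succ, map_mul,
      trop_log_mul (trop_emb_ne_zero (s_pow_ne_zero hc m)) (trop_emb_ne_zero hc), ih]
    push_cast
    ring

private lemma exists_log_lt (t : ℝ) :
    ∃ b : S, b ≠ 0 ∧ Trop.log (TropSub.emb (S := S) b) < t := by
  obtain ⟨a, ha0, ha1⟩ := IdemTOSemifield.exists_nontrivial_unit (K := S)
  have key : ∃ c : S, c ≠ 0 ∧ Trop.log (TropSub.emb (S := S) c) < 0 := by
    have hA0 : (TropSub.emb (S := S) a : Trop) ≠ 0 := trop_emb_ne_zero ha0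
    have hA1 : (TropSub.emb (S := S) a : Trop) ≠ 1 := by
      intro h
      exact ha1 (TropSub.emb_injective (by rw [h, map_one]))
    have hlog : Trop.log (TropSub.emb (S := S) a) ≠ 0 := by
      intro h
      rcases Real.log_eq_zero.mp h with h' | h' | h'
      · exact hA0 (by exact_mod_cast h')
      · exact hA1 (by exact_mod_cast h')
      · have := (Trop.toNNReal (TropSub.emb (S := S) a)).coe_nonneg
        rw [h'] at this
        linarith
    rcases lt_or_gt_of_ne hlog with h | h
    · exact ⟨a, ha0, h⟩
    · obtain ⟨c, hc⟩ := IdemTOSemifield.exists_inv a ha0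
      have hc0 : c ≠ 0 := by
        intro h0
        rw [h0, mul_zero] at hc
        exact s_one_ne_zero hc.symm
      have hsum : Trop.log (TropSub.emb (S := S) a) + Trop.log (TropSub.emb (S := S) c) = 0 := by
        rw [← trop_log_mul hA0 (trop_emb_ne_zero hc0), ← map_mul, hc, map_one, trop_log_one]
      exact ⟨c, hc0, by linarith⟩
  obtain ⟨c, hc0, hcl⟩ := key
  set L := Trop.log (TropSub.emb (S := S) c) with hL
  obtain ⟨m, hm⟩ := exists_nat_gt (t / L)
  refine ⟨c ^ m, s_pow_ne_zero hc0 m, ?_⟩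
  rw [log_emb_pow hc0 m, ← hL]
  have h1 : (m : ℝ) * L < (t / L) * L := by
    exact mul_lt_mul_of_neg_right hm hcl
  rwa [div_mul_cancel₀ t (ne_of_lt hcl)] at h1

private lemma lex_lt_of_head {k : ℕ} (hk : 1 ≤ k) {v w : Fin k → ℝ}
    (h : v ⟨0, hk⟩ < w ⟨0, hk⟩) : toLex v < toLex w := by
  refine ⟨⟨0, hk⟩, fun j hj => absurd hj ?_, h⟩
  simp [Fin.lt_def]

private lemma mulVec_cons_head {n k : ℕ} (hk : 1 ≤ k) (C : Matrix (Fin k) (Fin (n + 1)) ℝ)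
    (β : ℝ) (u : Fin n → ℝ) :
    C.mulVec (Fin.cons β u) ⟨0, hk⟩ =
      C ⟨0, hk⟩ 0 * β + ∑ j : Fin n, C ⟨0, hk⟩ j.succ * u j := by
  simp [Matrix.mulVec, dotProduct, Fin.sum_univ_succ]

end AuxLemmas

theorem matrix_prime_scontinuous_iff_first_entry_pos {S : Type*} [TropSub S] {n k : ℕ}
    (hn : 1 ≤ n) (hk : 1 ≤ k) (C : Matrix (Fin k) (Fin (n + 1)) ℝ)
    (hcol : toLex (0 : Fin k → ℝ) ≤ toLex fun i => C i 0)
    (hrows : ∀ i : Fin k, C i ≠ 0) :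
    (∀ f g : AddMonoidAlgebra S (Fin n → ℤ), f ≠ 0 → g ≠ 0 →
        ∃ b : S, b ≠ 0 ∧
          matrixPsi C (AddMonoidAlgebra.singleZeroRingHom b * g) < matrixPsi C f) ↔
      0 < C ⟨0, hk⟩ 0 := by
  constructor
  · -- S-continuity implies the (1,1) entry is positive
    intro H
    by_contra hC
    push_neg at hC
    -- first, the (1,1) entry is zero
    have hc00 : C ⟨0, hk⟩ 0 = 0 := by
      refine le_antisymm hC ?_
      by_contra hneg
      push_neg at hneg
      have : toLex (fun i => C i 0) < toLex (0 : Fin k → ℝ) :=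
        lex_lt_of_head hk (show C ⟨0, hk⟩ 0 < (0 : Fin k → ℝ) ⟨0, hk⟩ by simpa using hneg)
      exact absurd hcol this.not_ge
    -- the first row has a nonzero entry, necessarily not in column 0
    obtain ⟨l, hl⟩ := Function.ne_iff.mp (hrows ⟨0, hk⟩)
    have hl0 : l ≠ 0 := by
      intro h
      rw [h] at hl
      exact hl (by simpa using hc00)
    obtain ⟨j, rfl⟩ := Fin.exists_succ_eq.mpr hl0
    set w0 : ℝ := C ⟨0, hk⟩ j.succ with hw0
    have hw0ne : w0 ≠ 0 := by simpa using hl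
    -- test polynomials
    set e : Fin n → ℤ := Pi.single j 1 with he
    have hee : e ≠ -e := by
      intro h
      have h1 : e j = -e j := by rw [← Pi.neg_apply, ← h]
      rw [he, Pi.single_eq_same] at h1
      omega
    set f : AddMonoidAlgebra S (Fin n → ℤ) := AddMonoidAlgebra.ofCoeff (Finsupp.single 0 1) with hfdef
    set g : AddMonoidAlgebra S (Fin n → ℤ) :=
      AddMonoidAlgebra.ofCoeff (Finsupp.single e 1 + Finsupp.single (-e) 1) with hgdef
    have hge : g.coeff e = 1 := by
      rw [hgdef, AddMonoidAlgebra.coeff_ofCoeff, Finsupp.add_apply, Finsupp.single_eq_same,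
        Finsupp.single_eq_of_ne (by simpa using hee), add_zero]
    have hgne : g.coeff (-e) = 1 := by
      rw [hgdef, AddMonoidAlgebra.coeff_ofCoeff, Finsupp.add_apply, Finsupp.single_eq_same,
        Finsupp.single_eq_of_ne (Ne.symm (by simpa using hee)), zero_add]
    have hf : f ≠ 0 := by
      intro h
      have : f.coeff 0 = 0 := by rw [h]; rfl
      rw [hfdef, AddMonoidAlgebra.coeff_ofCoeff, Finsupp.single_eq_same] at this
      exact s_one_ne_zero this
    have hg : g ≠ 0 := by
      intro h
      have : g.coeff e = 0 := by rw [h]; rfl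
      rw [hge] at this
      exact s_one_ne_zero this
    obtain ⟨b, hb0, hlt⟩ := H f g hf hg
    -- Ψ(f) = 0
    have hPsif : matrixPsi C f = WithBot.some (toLex (0 : Fin k → ℝ)) := by
      rw [matrixPsi, hfdef, AddMonoidAlgebra.coeff_ofCoeff, Finsupp.support_single_ne_zero _ s_one_ne_zero]
      rw [Finset.sup_singleton]
      congr 1
      have hcoef : (Finsupp.single (0 : Fin n → ℤ) (1 : S)) 0 = 1 := Finsupp.single_eq_same
      rw [hcoef, map_one, trop_log_one]
      have hvec : (Fin.cons (0 : ℝ) fun i => (((0 : Fin n → ℤ) i : ℤ) : ℝ)) =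
          (0 : Fin (n + 1) → ℝ) := by
        funext i
        refine Fin.cases ?_ (fun i => ?_) i <;> simp
      rw [hvec, Matrix.mulVec_zero]
    -- the product b·g
    set bg : AddMonoidAlgebra S (Fin n → ℤ) := AddMonoidAlgebra.singleZeroRingHom b * g
      with hbg
    have hbgapp : ∀ u : Fin n → ℤ, bg.coeff u = b * g.coeff u := by
      intro u
      have hsz : (AddMonoidAlgebra.singleZeroRingHom b : AddMonoidAlgebra S (Fin n → ℤ)) =
          AddMonoidAlgebra.single 0 b := rfl
      rw [hbg, hsz, AddMonoidAlgebra.coeff_single_zero_mul]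
    -- pick a term of b·g with positive head coordinate
    have key : ∃ u : Fin n → ℤ, u ∈ bg.coeff.support ∧
        0 < C.mulVec (Fin.cons (Trop.log (TropSub.emb (S := S) (bg.coeff u))) fun i => ((u i : ℤ) : ℝ))
          ⟨0, hk⟩ := by
      rcases lt_or_gt_of_ne hw0ne with hw | hw
      · -- w0 < 0 : use -e
        refine ⟨-e, ?_, ?_⟩
        · rw [Finsupp.mem_support_iff, hbgapp, hgne, mul_one]; exact hb0
        · rw [mulVec_cons_head hk, hc00, zero_mul, zero_add]
          have : ∑ i : Fin n, C ⟨0, hk⟩ i.succ * (((-e) i : ℤ) : ℝ) = -w0 := by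
            rw [hw0, he]
            rw [Finset.sum_eq_single j]
            · simp
            · intro i _ hij
              simp [Pi.single_eq_of_ne hij]
            · intro h
              exact absurd (Finset.mem_univ j) h
          rw [this]
          linarith
      · -- w0 > 0 : use e
        refine ⟨e, ?_, ?_⟩
        · rw [Finsupp.mem_support_iff, hbgapp, hge, mul_one]; exact hb0
        · rw [mulVec_cons_head hk, hc00, zero_mul, zero_add]
          have : ∑ i : Fin n, C ⟨0, hk⟩ i.succ * ((e i : ℤ) : ℝ) = w0 := by
            rw [hw0, he]
            rw [Finset.sum_eq_single j]
            · simp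
            · intro i _ hij
              simp [Pi.single_eq_of_ne hij]
            · intro h
              exact absurd (Finset.mem_univ j) h
          rw [this]
          exact hw
    obtain ⟨u, hu, hupos⟩ := key
    have hle : (WithBot.some (toLex (C.mulVec
        (Fin.cons (Trop.log (TropSub.emb (S := S) (bg.coeff u))) fun i => ((u i : ℤ) : ℝ)))) : WithBot (Lex (Fin k → ℝ))) ≤
        matrixPsi C bg := by
      rw [matrixPsi]
      exact Finset.le_sup (f := fun u => WithBot.some (toLex (C.mulVec
        (Fin.cons (Trop.log (TropSub.emb (S := S) (bg.coeff u))) fun i => ((u i : ℤ) : ℝ))))) hu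
    have hgt : (WithBot.some (toLex (0 : Fin k → ℝ)) : WithBot (Lex (Fin k → ℝ))) <
        WithBot.some (toLex (C.mulVec
          (Fin.cons (Trop.log (TropSub.emb (S := S) (bg.coeff u))) fun i => ((u i : ℤ) : ℝ)))) := by
      exact WithBot.coe_lt_coe.mpr (lex_lt_of_head hk (by simpa using hupos))
    rw [hPsif] at hlt
    exact absurd (hlt.trans (hgt.trans_le hle)) (lt_irrefl _)
  · -- positivity of the (1,1) entry implies S-continuity
    intro hC f g hf hg
    obtain ⟨u0, hu0⟩ := Finsupp.support_nonempty_iff.mpr (AddMonoidAlgebra.coeff_eq_zero.not.mpr hf)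
    set F : Fin k → ℝ :=
      C.mulVec (Fin.cons (Trop.log (TropSub.emb (S := S) (f.coeff u0))) fun i => ((u0 i : ℤ) : ℝ)) with hF
    have hFle : (WithBot.some (toLex F) : WithBot (Lex (Fin k → ℝ))) ≤ matrixPsi C f := by
      rw [matrixPsi, hF]
      exact Finset.le_sup (f := fun u => WithBot.some (toLex (C.mulVec
        (Fin.cons (Trop.log (TropSub.emb (S := S) (f.coeff u))) fun i => ((u i : ℤ) : ℝ))))) hu0
    have hgsupp : g.coeff.support.Nonempty := Finsupp.support_nonempty_iff.mpr (AddMonoidAlgebra.coeff_eq_zero.not.mpr hg)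
    set M : ℝ := g.coeff.support.sup' hgsupp (fun u =>
      C ⟨0, hk⟩ 0 * Trop.log (TropSub.emb (S := S) (g.coeff u)) +
        ∑ j : Fin n, C ⟨0, hk⟩ j.succ * ((u j : ℤ) : ℝ)) with hM
    obtain ⟨b, hb0, hblog⟩ := exists_log_lt (S := S) ((F ⟨0, hk⟩ - M) / C ⟨0, hk⟩ 0)
    refine ⟨b, hb0, ?_⟩
    set bg : AddMonoidAlgebra S (Fin n → ℤ) := AddMonoidAlgebra.singleZeroRingHom b * g
      with hbg
    have hbgapp : ∀ u : Fin n → ℤ, bg.coeff u = b * g.coeff u := by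
      intro u
      have hsz : (AddMonoidAlgebra.singleZeroRingHom b : AddMonoidAlgebra S (Fin n → ℤ)) =
          AddMonoidAlgebra.single 0 b := rfl
      rw [hbg, hsz, AddMonoidAlgebra.coeff_single_zero_mul]
    have hbot : (⊥ : WithBot (Lex (Fin k → ℝ))) < matrixPsi C f :=
      lt_of_lt_of_le (WithBot.bot_lt_coe _) hFle
    rw [matrixPsi, Finset.sup_lt_iff hbot]
    intro u hu
    have hgu : g.coeff u ≠ 0 := by
      intro h0
      rw [Finsupp.mem_support_iff, hbgapp, h0, mul_zero] at hu
      exact hu rfl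
    have husup : u ∈ g.coeff.support := Finsupp.mem_support_iff.mpr hgu
    have hlog : Trop.log (TropSub.emb (S := S) (bg.coeff u)) =
        Trop.log (TropSub.emb (S := S) b) + Trop.log (TropSub.emb (S := S) (g.coeff u)) := by
      rw [hbgapp, map_mul, trop_log_mul (trop_emb_ne_zero hb0) (trop_emb_ne_zero hgu)]
    refine lt_of_lt_of_le ?_ hFle
    rw [WithBot.coe_lt_coe]
    apply lex_lt_of_head hk
    rw [mulVec_cons_head hk, hlog]
    have hMle : C ⟨0, hk⟩ 0 * Trop.log (TropSub.emb (S := S) (g.coeff u)) +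
        ∑ j : Fin n, C ⟨0, hk⟩ j.succ * ((u j : ℤ) : ℝ) ≤ M := by
      rw [hM]
      exact Finset.le_sup' (fun u => C ⟨0, hk⟩ 0 * Trop.log (TropSub.emb (S := S) (g.coeff u)) +
        ∑ j : Fin n, C ⟨0, hk⟩ j.succ * ((u j : ℤ) : ℝ)) husup
    have hb' : Trop.log (TropSub.emb (S := S) b) * C ⟨0, hk⟩ 0 < F ⟨0, hk⟩ - M :=
      (lt_div_iff₀ hC).mp hblog
    have expand : C ⟨0, hk⟩ 0 * (Trop.log (TropSub.emb (S := S) b) + Trop.log (TropSub.emb (S := S) (g.coeff u))) +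
        ∑ j : Fin n, C ⟨0, hk⟩ j.succ * ((u j : ℤ) : ℝ) =
        (C ⟨0, hk⟩ 0 * Trop.log (TropSub.emb (S := S) (g.coeff u)) +
          ∑ j : Fin n, C ⟨0, hk⟩ j.succ * ((u j : ℤ) : ℝ)) +
          Trop.log (TropSub.emb (S := S) b) * C ⟨0, hk⟩ 0 := by ring
    rw [expand]
    linarith
end

section
/- Let S be a sub-semifield of 𝕋 (with S ≠ 𝔹), M a commutative monoid, and P a prime congruence on S[M]. Then the set Cnvg P of series converging at P is complete with respect to the pseudometric d_P, in the following sense. Say d_P(f,g) < |p|_P/|q|_P (for p, q ∈ S[M] with (p,0) ∉ P and (q,0) ∉ P) if for every u ∈ M with f_u ≠ g_u one has q·((f_u + g_u)·χ^u) <_P p. Then for every sequence (f_i)_{i∈ℕ} in Cnvg P which is Cauchy — meaning that for all p, q ∈ S[M] with (p,0) ∉ P and (q,0) ∉ P there exists N such that for all i, j ≥ N, d_P(f_i, f_j) < |p|_P/|q|_P — there exists F ∈ Cnvg P such that for all such p, q there exists N with d_P(f_j, F) < |p|_P/|q|_P for all j ≥ N. -/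
/-- A prime congruence on a commutative semiring: the congruence is proper and the quotient is
totally ordered with respect to the canonical order and cancellative. -/
structure IsPrimeCon {A : Type*} [CommSemiring A] (P : RingCon A) : Prop where
  proper : ¬ P 0 1
  totalOrd : ∀ a b : A, P (a + b) a ∨ P (a + b) b
  cancel : ∀ a b c : A, ¬ P a 0 → P (a * b) (a * c) → P b c

/-- `x ≤_P y`: the image of `x` in `A/P` is at most that of `y` in the canonical order. -/
def leP {A : Type*} [CommSemiring A] (P : RingCon A) (x y : A) : Prop := P (x + y) y

/-- `x <_P y`: the image of `x` in `A/P` is strictly below that of `y`. -/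
def ltP {A : Type*} [CommSemiring A] (P : RingCon A) (x y : A) : Prop := P (x + y) y ∧ ¬ P x y

/-- A prime congruence `P` on an `S`-algebra `A` (with structure map `ι`) is `S`-continuous:
for all `f, g` not in the ideal-kernel of `P` there is a nonzero `b ∈ S` with `ι b * g <_P f`. -/
def SCont {S A : Type*} [CommSemiring S] [CommSemiring A] (ι : S →+* A) (P : RingCon A) : Prop :=
  ∀ f g : A, ¬ P f 0 → ¬ P g 0 → ∃ b : S, b ≠ 0 ∧ ltP P (ι b * g) f

/-- A series (a function `f : M → S`, thought of as `Σ_u f_u χ^u`) converges at a prime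
congruence `P` on `S[M]` if for every `g ∈ S[M]` outside the ideal-kernel of `P` only finitely
many terms `f_u · χ^u` satisfy `g ≤_P f_u · χ^u`. -/
def SeriesConverges {S M : Type*} [IdemTOSemifield S] [AddCommMonoid M]
    (P : RingCon (AddMonoidAlgebra S M)) (f : M → S) : Prop :=
  ∀ g : AddMonoidAlgebra S M, ¬ P g 0 →
    {u : M | leP P g (AddMonoidAlgebra.single u (f u))}.Finite

/-- The elementwise encoding of `d_P(f, g) < |p|_P / |q|_P`: for every `u` with `f_u ≠ g_u` one
has `q · ((f_u + g_u) · χ^u) <_P p`. -/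
def distLT {S M : Type*} [IdemTOSemifield S] [AddCommMonoid M]
    (P : RingCon (AddMonoidAlgebra S M)) (f g : M → S)
    (p q : AddMonoidAlgebra S M) : Prop :=
  ∀ u : M, f u ≠ g u → ltP P (q * AddMonoidAlgebra.single u (f u + g u)) p

/-!
Statement 17: the semiring of series convergent at a prime `P` on `S[M]` is complete with respect
to the pseudometric `d_P`: every Cauchy sequence converges.
-/

section CnvgHelpers

variable {A : Type*} [CommSemiring A] (P : RingCon A)

private lemma leP_trans' {x y z : A} (h1 : leP P x y) (h2 : leP P y z) : leP P x z := by
  unfold leP at *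
  have ha : P (x + z) (x + (y + z)) := P.add (P.refl x) (P.symm h2)
  have hb : P (x + (y + z)) (y + z) := by
    have := P.add h1 (P.refl z); rwa [add_assoc] at this
  exact P.trans (P.trans ha hb) h2

private lemma leP_ltP_trans' {x y z : A} (h1 : leP P x y) (h2 : ltP P y z) : ltP P x z := by
  obtain ⟨h2a, h2b⟩ := h2
  refine ⟨leP_trans' P h1 h2a, fun hxz => h2b ?_⟩
  -- hxz : P x z; goal : P y z
  have h4 : P (z + y) y := by
    have := P.add (P.symm hxz) (P.refl y)
    unfold leP at h1
    exact P.trans this h1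
  have h5 : P (z + y) z := by rwa [add_comm] at h2a
  exact P.trans (P.symm h4) h5

private lemma not_leP_ltP' {x y : A} (h1 : leP P x y) (h2 : ltP P y x) : False := by
  apply h2.2
  have h3 : P (y + x) x := h2.1
  have h4 : P (y + x) y := by unfold leP at h1; rwa [add_comm] at h1
  exact P.trans (P.symm h4) h3

end CnvgHelpers


theorem cnvg_complete {S M : Type*} [TropSub S] [AddCommMonoid M]
    (P : RingCon (AddMonoidAlgebra S M)) (hP : IsPrimeCon P)
    (f : ℕ → M → S) (hconv : ∀ i : ℕ, SeriesConverges P (f i))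
    (hcauchy : ∀ p q : AddMonoidAlgebra S M, ¬ P p 0 → ¬ P q 0 →
      ∃ N : ℕ, ∀ i j : ℕ, N ≤ i → N ≤ j → distLT P (f i) (f j) p q) :
    ∃ F : M → S, SeriesConverges P F ∧
      ∀ p q : AddMonoidAlgebra S M, ¬ P p 0 → ¬ P q 0 →
        ∃ N : ℕ, ∀ j : ℕ, N ≤ j → distLT P (f j) F p q := by
  classical
  have hidem : ∀ a : S, a + a = a := fun a => by
    rw [IdemTOSemifield.add_eq_max, max_self]
  set F : M → S := fun u =>
    if h : ∃ N, ∀ i, N ≤ i → f i u = f N u then f h.choose u else 0 with hFdef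
  -- key structural fact
  have key : ∀ u j, f j u ≠ F u →
      ∃ k, j ≤ k ∧ f j u ≠ f k u ∧
        (f j u + F u) + (f j u + f k u) = f j u + f k u := by
    intro u j hne
    by_cases h : ∃ N, ∀ i, N ≤ i → f i u = f N u
    · have hFu : F u = f h.choose u := by rw [hFdef]; exact dif_pos h
      have hk : f (max j h.choose) u = f h.choose u :=
        h.choose_spec (max j h.choose) (le_max_right _ _)
      refine ⟨max j h.choose, le_max_left _ _, ?_, ?_⟩
      · rw [hk, ← hFu]; exact hne
      · rw [hk, ← hFu]; exact hidem _
    · have hFu : F u = 0 := by rw [hFdef]; exact dif_neg h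
      push_neg at h
      obtain ⟨k, hjk, hne'⟩ := h j
      refine ⟨k, hjk, fun hh => hne' hh.symm, ?_⟩
      rw [hFu, add_zero, ← add_assoc, hidem]
  -- the limit property
  have hlim : ∀ p q : AddMonoidAlgebra S M, ¬ P p 0 → ¬ P q 0 →
      ∃ N : ℕ, ∀ j : ℕ, N ≤ j → distLT P (f j) F p q := by
    intro p q hp hq
    obtain ⟨N, hN⟩ := hcauchy p q hp hq
    refine ⟨N, fun j hj u hne => ?_⟩
    obtain ⟨k, hjk, hne', hsum⟩ := key u j hne
    have hc := hN j k hj (hj.trans hjk) u hne'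
    refine leP_ltP_trans' P ?_ hc
    unfold leP
    rw [← mul_add, ← AddMonoidAlgebra.single_add, hsum]
    exact P.refl _
  refine ⟨F, ?_, hlim⟩
  intro g hg
  have h1 : ¬ P (1 : AddMonoidAlgebra S M) 0 := fun h => hP.proper (P.symm h)
  obtain ⟨N, hN⟩ := hlim g 1 hg h1
  have hd := hN N le_rfl
  refine (hconv N g hg).subset ?_
  intro u hu
  simp only [Set.mem_setOf_eq] at hu ⊢
  by_cases hne : f N u = F u
  · rwa [hne]
  · exfalso
    have hc := hd u hne
    rw [one_mul] at hc
    have hle2 : leP P (AddMonoidAlgebra.single u (F u))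
        (AddMonoidAlgebra.single u (f N u + F u)) := by
      unfold leP
      rw [← AddMonoidAlgebra.single_add, add_comm (f N u) (F u), ← add_assoc, hidem]
      exact P.refl _
    exact not_leP_ltP' P (leP_trans' P hu hle2) hc
end
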